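/- The subgroup μ(G), the kernel of the derived map ρ': [G,Gφ] → G', [g,hφ] ↦ [g,h], is contained in the center of ν(G). -/

import Mathlib

open Monoid Subgroup
open scoped commutatorElement

/-- The relators of the presentation of ν(G): for all g, h, k ∈ G,
`[g,hφ]^k = [g^k,(h^k)φ]` and `[g,hφ]^(kφ) = [g^k,(h^k)φ]` (exponents denote conjugation). -/
def nuRels (G : Type*) [Group G] : Set (Monoid.Coprod G G) :=
  { r | ∃ g h k : G,
      r = ((Coprod.inl k)⁻¹ * ⁅(Coprod.inl g : Coprod G G), Coprod.inr h⁆ * Coprod.inl k) *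
          (⁅(Coprod.inl (k⁻¹ * g * k) : Coprod G G), Coprod.inr (k⁻¹ * h * k)⁆)⁻¹ ∨
      r = ((Coprod.inr k)⁻¹ * ⁅(Coprod.inl g : Coprod G G), Coprod.inr h⁆ * Coprod.inr k) *
          (⁅(Coprod.inl (k⁻¹ * g * k) : Coprod G G), Coprod.inr (k⁻¹ * h * k)⁆)⁻¹ }

/-- The group ν(G): the quotient of the free product G * Gφ by the defining relations. -/
def Nu (G : Type*) [Group G] := Coprod G G ⧸ Subgroup.normalClosure (nuRels G)

instance (G : Type*) [Group G] : Group (Nu G) := QuotientGroup.Quotient.group _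

/-- The canonical map G → ν(G) (the copy `G`). -/
def nuL (G : Type*) [Group G] : G →* Nu G := (QuotientGroup.mk' _).comp Coprod.inl

/-- The canonical map G → ν(G) (the copy `Gφ`). -/
def nuR (G : Type*) [Group G] : G →* Nu G := (QuotientGroup.mk' _).comp Coprod.inr


/-!
Let `C` be the centralizer of `Gφ[G,Gφ]`; it is normal because `Gφ[G,Gφ]` is normalized by both
copies of `G`. The defining relations give Rocco's identity `[[g,hφ],qφ] = [[g,h],qφ]` and show
that `[g,hφ]` and `[g,h]` conjugate the mixed commutators alike, so `[g,hφ] ≡ [g,h] (mod C)`.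
Hence `x ↦ xC` and `x ↦ ρ'(x)C` are homomorphisms `[G,Gφ] → ν(G)/C` agreeing on generators, and
every `x ∈ μ(G)` lies in `C`. Such an `x` commutes with `Gφ`, and since conjugation by `k` and by
`kφ` agree on `[G,Gφ]`, also with `G`.
-/

theorem Subgroup.inv_mul_mem_centralizer_iff {G : Type*} [Group G] {a b : G} {S : Set G} :
    a⁻¹ * b ∈ centralizer S ↔ ∀ w ∈ S, a * w * a⁻¹ = b * w * b⁻¹ := by
  rw [mem_centralizer_iff]
  refine forall₂_congr fun w _ => ?_
  constructor <;> intro h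
  · calc a * w * a⁻¹ = a * (w * (a⁻¹ * b)) * b⁻¹ := by group
      _ = b * w * b⁻¹ := by rw [h]; group
  · calc w * (a⁻¹ * b) = a⁻¹ * (a * w * a⁻¹) * b := by group
      _ = a⁻¹ * b * w := by rw [h]; group

namespace Nu

variable {G : Type*} [Group G]

theorem conj_nuL_commutator (g h k : G) :
    nuL G k * ⁅nuL G g, nuR G h⁆ * (nuL G k)⁻¹ = ⁅nuL G (k * g * k⁻¹), nuR G (k * h * k⁻¹)⁆ := by
  have hr : (nuL G k⁻¹)⁻¹ * ⁅nuL G g, nuR G h⁆ * nuL G k⁻¹ *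
      ⁅nuL G (k⁻¹⁻¹ * g * k⁻¹), nuR G (k⁻¹⁻¹ * h * k⁻¹)⁆⁻¹ = 1 :=
    (QuotientGroup.eq_one_iff _).mpr (subset_normalClosure ⟨g, h, k⁻¹, Or.inl rfl⟩)
  simpa only [map_inv, inv_inv, mul_inv_eq_one] using hr

theorem conj_nuR_commutator (g h k : G) :
    nuR G k * ⁅nuL G g, nuR G h⁆ * (nuR G k)⁻¹ = ⁅nuL G (k * g * k⁻¹), nuR G (k * h * k⁻¹)⁆ := by
  have hr : (nuR G k⁻¹)⁻¹ * ⁅nuL G g, nuR G h⁆ * nuR G k⁻¹ *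
      ⁅nuL G (k⁻¹⁻¹ * g * k⁻¹), nuR G (k⁻¹⁻¹ * h * k⁻¹)⁆⁻¹ = 1 :=
    (QuotientGroup.eq_one_iff _).mpr (subset_normalClosure ⟨g, h, k⁻¹, Or.inr rfl⟩)
  simpa only [map_inv, inv_inv, mul_inv_eq_one] using hr

theorem commutator_commutator_nuR (g h q : G) :
    ⁅⁅nuL G g, nuR G h⁆, nuR G q⁆ = ⁅nuL G ⁅g, h⁆, nuR G q⁆ := by
  have hconj := conj_nuR_commutator g⁻¹ (h⁻¹ * q * h) h
  rw [show h * (h⁻¹ * q * h) * h⁻¹ = q by group] at hconj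
  calc ⁅⁅nuL G g, nuR G h⁆, nuR G q⁆
      = nuL G g * (nuR G h * ⁅nuL G g⁻¹, nuR G (h⁻¹ * q * h)⁆ * (nuR G h)⁻¹) * nuR G q *
          (nuL G g)⁻¹ * (nuR G q)⁻¹ := by
        simp only [map_mul, map_inv, commutatorElement_def]; group
    _ = nuL G g * ⁅nuL G (h * g⁻¹ * h⁻¹), nuR G q⁆ * nuR G q * (nuL G g)⁻¹ * (nuR G q)⁻¹ := by
        rw [hconj]
    _ = ⁅nuL G ⁅g, h⁆, nuR G q⁆ := by
        simp only [map_mul, map_inv, commutatorElement_def]; group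

theorem conj_commutator_commutator (g h α β : G) :
    ⁅nuL G g, nuR G h⁆ * ⁅nuL G α, nuR G β⁆ * ⁅nuL G g, nuR G h⁆⁻¹ =
      ⁅nuL G (⁅g, h⁆ * α * ⁅g, h⁆⁻¹), nuR G (⁅g, h⁆ * β * ⁅g, h⁆⁻¹)⁆ := by
  calc ⁅nuL G g, nuR G h⁆ * ⁅nuL G α, nuR G β⁆ * ⁅nuL G g, nuR G h⁆⁻¹
      = nuL G g * (nuR G h * (nuL G g⁻¹ * (nuR G h⁻¹ * ⁅nuL G α, nuR G β⁆ * (nuR G h⁻¹)⁻¹) *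
          (nuL G g⁻¹)⁻¹) * (nuR G h)⁻¹) * (nuL G g)⁻¹ := by
        simp only [map_inv, commutatorElement_def]; group
    _ = _ := by
        rw [conj_nuR_commutator, conj_nuL_commutator, conj_nuR_commutator, conj_nuL_commutator]
        congr 2 <;> simp only [commutatorElement_def] <;> group

theorem range_nuL_sup_range_nuR : (nuL G).range ⊔ (nuR G).range = ⊤ := by
  rw [eq_top_iff]
  rintro x -
  obtain ⟨w, rfl⟩ := QuotientGroup.mk'_surjective _ x
  induction w using Coprod.induction_on with
  | inl g => exact mem_sup_left ⟨g, rfl⟩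
  | inr h => exact mem_sup_right ⟨h, rfl⟩
  | mul w₁ w₂ h₁ h₂ => rw [map_mul]; exact mul_mem h₁ h₂

def mixedCommutators (G : Type*) [Group G] : Set (Nu G) :=
  {w | ∃ g h : G, ⁅nuL G g, nuR G h⁆ = w}

theorem closure_mixedCommutators :
    closure (mixedCommutators G) = ⁅(nuL G).range, (nuR G).range⁆ := by
  rw [Subgroup.commutator_def]
  congr
  ext w
  simp [mixedCommutators]

theorem inv_nuL_mul_nuR_mem_centralizer (q : G) :
    (nuL G q)⁻¹ * nuR G q ∈
      centralizer ((⁅(nuL G).range, (nuR G).range⁆ : Subgroup (Nu G)) : Set (Nu G)) := by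
  rw [← closure_mixedCommutators, centralizer_closure, inv_mul_mem_centralizer_iff]
  rintro _ ⟨g, h, rfl⟩
  rw [conj_nuL_commutator, conj_nuR_commutator]

/-- `Gφ[G,Gφ]`, which is the normal closure of `Gφ` in ν(G). -/
def phiClosure (G : Type*) [Group G] : Subgroup (Nu G) :=
  closure (Set.range (nuR G) ∪ mixedCommutators G)

instance normal_phiClosure : (phiClosure G).Normal := by
  rw [← normalizer_eq_top_iff, eq_top_iff, ← range_nuL_sup_range_nuR]
  refine sup_le (le_normalizer_closure_iff.mpr ?_) (le_normalizer_closure_iff.mpr ?_)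
  · rintro _ ⟨k, rfl⟩ _ (⟨q, rfl⟩ | ⟨g, h, rfl⟩)
    · rw [show nuL G k * nuR G q * (nuL G k)⁻¹ = ⁅nuL G k, nuR G q⁆ * nuR G q by group]
      exact mul_mem (subset_closure (Or.inr ⟨k, q, rfl⟩)) (subset_closure (Or.inl ⟨q, rfl⟩))
    · rw [conj_nuL_commutator]
      exact subset_closure (Or.inr ⟨_, _, rfl⟩)
  · rintro _ ⟨k, rfl⟩ _ (⟨q, rfl⟩ | ⟨g, h, rfl⟩)
    · rw [← map_inv, ← map_mul, ← map_mul]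
      exact subset_closure (Or.inl ⟨_, rfl⟩)
    · rw [conj_nuR_commutator]
      exact subset_closure (Or.inr ⟨_, _, rfl⟩)

theorem inv_commutator_mul_nuL_commutator_mem_centralizer (g h : G) :
    ⁅nuL G g, nuR G h⁆⁻¹ * nuL G ⁅g, h⁆ ∈ centralizer (phiClosure G : Set (Nu G)) := by
  rw [phiClosure, centralizer_closure, inv_mul_mem_centralizer_iff]
  rintro _ (⟨q, rfl⟩ | ⟨α, β, rfl⟩)
  · simpa only [commutatorElement_def, mul_left_inj] using commutator_commutator_nuR g h q
  · rw [conj_commutator_commutator, conj_nuL_commutator]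

theorem inv_mul_nuL_mem_centralizer
    (ρ : (⁅(nuL G).range, (nuR G).range⁆ : Subgroup (Nu G)) →* G)
    (hρ : ∀ (g h : G) (hm : ⁅nuL G g, nuR G h⁆ ∈ ⁅(nuL G).range, (nuR G).range⁆),
      ρ ⟨⁅nuL G g, nuR G h⁆, hm⟩ = ⁅g, h⁆)
    (x : (⁅(nuL G).range, (nuR G).range⁆ : Subgroup (Nu G))) :
    (x : Nu G)⁻¹ * nuL G (ρ x) ∈ centralizer (phiClosure G : Set (Nu G)) := by
  let f₁ := (QuotientGroup.mk' (centralizer (phiClosure G : Set (Nu G)))).comp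
    (⁅(nuL G).range, (nuR G).range⁆ : Subgroup (Nu G)).subtype
  let f₂ := (QuotientGroup.mk' (centralizer (phiClosure G : Set (Nu G)))).comp
    ((nuL G).comp ρ)
  suffices f₁ = f₂ from QuotientGroup.eq.mp (DFunLike.congr_fun this x)
  refine MonoidHom.eq_of_eqOn_dense (closure_preimage_eq_top _) ?_
  rintro ⟨_, hm⟩ ⟨_, ⟨g, rfl⟩, _, ⟨h, rfl⟩, rfl⟩
  refine QuotientGroup.eq.mpr ?_
  simpa only [MonoidHom.coe_comp, Function.comp_apply, Subgroup.coe_subtype, hρ] using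
    inv_commutator_mul_nuL_commutator_mem_centralizer g h

end Nu

open Nu in
/-- μ(G), the kernel of the derived map ρ' : [G,Gφ] → G', is contained in the
center of ν(G). -/
theorem nu_mu_central (G : Type*) [Group G]
    (ρ : (⁅(nuL G).range, (nuR G).range⁆ : Subgroup (Nu G)) →* G)
    (hρ : ∀ (g h : G) (hm : ⁅nuL G g, nuR G h⁆ ∈ ⁅(nuL G).range, (nuR G).range⁆),
      ρ ⟨⁅nuL G g, nuR G h⁆, hm⟩ = ⁅g, h⁆)
    (x : (⁅(nuL G).range, (nuR G).range⁆ : Subgroup (Nu G))) (hx : x ∈ ρ.ker) :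
    (x : Nu G) ∈ Subgroup.center (Nu G) := by
  have hx_cent : (x : Nu G) ∈ centralizer (phiClosure G : Set (Nu G)) := by
    simpa only [MonoidHom.mem_ker.mp hx, map_one, mul_one, inv_mem_iff] using
      inv_mul_nuL_mem_centralizer ρ hρ x
  have hR : (nuR G).range ≤ centralizer {(x : Nu G)} := by
    rintro _ ⟨q, rfl⟩
    exact mem_centralizer_singleton_iff.mpr (hx_cent _ (subset_closure (Or.inl ⟨q, rfl⟩)))
  have hL : (nuL G).range ≤ centralizer {(x : Nu G)} := by
    rintro _ ⟨q, rfl⟩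
    have hq : (nuL G q)⁻¹ * nuR G q ∈ centralizer {(x : Nu G)} :=
      mem_centralizer_singleton_iff.mpr (inv_nuL_mul_nuR_mem_centralizer q x x.2).symm
    simpa only [mul_inv_rev, inv_inv, mul_inv_cancel_left] using
      mul_mem (hR ⟨q, rfl⟩) (inv_mem hq)
  refine mem_center_iff.mpr fun w => ?_
  exact mem_centralizer_singleton_iff.mp
    ((range_nuL_sup_range_nuR (G := G) ▸ sup_le hL hR) (mem_top w))
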